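/- arXiv:2508.14209 — 4 statements merged into one kernel-verified Lean document; each statement's English description precedes it below -/
import Mathlib

section
/- Let ε ∈ [0,1), let A ∈ ℝ^{d×n}, let b ∈ ℝ^d, and let S : ℝ^d → ℝ^k be a linear map that is an ε-subspace embedding for a subspace V ⊆ ℝ^d that contains b and the range of A. Suppose x_s ∈ ℝ^n minimizes ‖Sb − SAx‖₂ over x ∈ ℝ^n and x_t ∈ ℝ^n minimizes ‖b − Ax‖₂ over x ∈ ℝ^n. Then ‖b − A x_t‖₂ ≤ ‖b − A x_s‖₂ ≤ √((1+ε)/(1−ε))·‖b − A x_t‖₂. -/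
open RealInnerProductSpace

/-- The image of `A.mulVec x`, viewed as a vector of `EuclideanSpace ℝ (Fin d)`. -/
noncomputable def mulVecEuc {d n : ℕ} (A : Matrix (Fin d) (Fin n) ℝ) (x : Fin n → ℝ) :
    EuclideanSpace ℝ (Fin d) :=
  (WithLp.equiv 2 (Fin d → ℝ)).symm (A.mulVec x)

/-- Sketch-and-solve quasi-optimality: if `S` is an `ε`-subspace embedding (`ε ∈ [0,1)`) for a
subspace `V ⊆ ℝ^d` containing `b` and the range of `A`, `x_s` minimizes `‖Sb - SAx‖₂`, and
`x_t` minimizes `‖b - Ax‖₂`, then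
`‖b - A x_t‖₂ ≤ ‖b - A x_s‖₂ ≤ √((1+ε)/(1-ε))·‖b - A x_t‖₂`. -/
theorem countsketch_stmt2 {d n k : ℕ} (ε : ℝ) (hε0 : 0 ≤ ε) (hε1 : ε < 1)
    (A : Matrix (Fin d) (Fin n) ℝ) (b : EuclideanSpace ℝ (Fin d))
    (V : Submodule ℝ (EuclideanSpace ℝ (Fin d)))
    (S : EuclideanSpace ℝ (Fin d) →ₗ[ℝ] EuclideanSpace ℝ (Fin k))
    (hb : b ∈ V) (hA : ∀ x : Fin n → ℝ, mulVecEuc A x ∈ V)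
    (hS : ∀ x ∈ V, ∀ y ∈ V, |⟪x, y⟫ - ⟪S x, S y⟫| ≤ ε * ‖x‖ * ‖y‖)
    (xs xt : Fin n → ℝ)
    (hxs : ∀ x : Fin n → ℝ, ‖S b - S (mulVecEuc A xs)‖ ≤ ‖S b - S (mulVecEuc A x)‖)
    (hxt : ∀ x : Fin n → ℝ, ‖b - mulVecEuc A xt‖ ≤ ‖b - mulVecEuc A x‖) :
    ‖b - mulVecEuc A xt‖ ≤ ‖b - mulVecEuc A xs‖ ∧
    ‖b - mulVecEuc A xs‖ ≤ Real.sqrt ((1 + ε) / (1 - ε)) * ‖b - mulVecEuc A xt‖ := by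
  refine ⟨hxt xs, ?_⟩
  set u := b - mulVecEuc A xs with hu_def
  set v := b - mulVecEuc A xt with hv_def
  have hu : u ∈ V := V.sub_mem hb (hA xs)
  have hv : v ∈ V := V.sub_mem hb (hA xt)
  have key : ∀ w ∈ V, (1 - ε) * ‖w‖ ^ 2 ≤ ‖S w‖ ^ 2 ∧ ‖S w‖ ^ 2 ≤ (1 + ε) * ‖w‖ ^ 2 := by
    intro w hw
    have h := abs_le.mp (hS w hw w hw)
    rw [real_inner_self_eq_norm_sq, real_inner_self_eq_norm_sq] at h
    constructor <;> nlinarith [h.1, h.2]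
  have h1 := (key u hu).1
  have h2 := (key v hv).2
  have hSu : ‖S u‖ ≤ ‖S v‖ := by
    have := hxs xt
    simpa [hu_def, hv_def, map_sub] using this
  have hpos : 0 < 1 - ε := by linarith
  have hsq : ‖u‖ ^ 2 ≤ (1 + ε) / (1 - ε) * ‖v‖ ^ 2 := by
    rw [div_mul_eq_mul_div, le_div_iff₀ hpos]
    nlinarith [norm_nonneg (S u), norm_nonneg (S v), hSu]
  calc ‖u‖ = Real.sqrt (‖u‖ ^ 2) := (Real.sqrt_sq (norm_nonneg _)).symm
    _ ≤ Real.sqrt ((1 + ε) / (1 - ε) * ‖v‖ ^ 2) := Real.sqrt_le_sqrt hsq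
    _ = Real.sqrt ((1 + ε) / (1 - ε)) * ‖v‖ := by
        rw [Real.sqrt_mul (by positivity), Real.sqrt_sq (norm_nonneg _)]
end

section
/- Let ε₁, ε₂ ∈ [0,1), let V be a subspace of ℝ^d, let S₁ : ℝ^d → ℝ^{k₁} be a linear map that is an ε₁-subspace embedding for V, and let S₂ : ℝ^{k₁} → ℝ^{k₂} be a linear map that is an ε₂-subspace embedding for the image subspace S₁(V). Then for every x ∈ V, (1−ε₁)(1−ε₂)·‖x‖₂² ≤ ‖S₂(S₁x)‖₂² ≤ (1+ε₁)(1+ε₂)·‖x‖₂². -/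
open RealInnerProductSpace

/-- Multisketch norm preservation: if `S₁` is an `ε₁`-subspace embedding for `V` and `S₂` is an
`ε₂`-subspace embedding for the image subspace `S₁(V)` (with `ε₁, ε₂ ∈ [0,1)`), then for every
`x ∈ V`, `(1-ε₁)(1-ε₂)‖x‖² ≤ ‖S₂(S₁x)‖² ≤ (1+ε₁)(1+ε₂)‖x‖²`. -/
theorem countsketch_stmt3 {d k₁ k₂ : ℕ} (ε₁ ε₂ : ℝ)
    (hε₁0 : 0 ≤ ε₁) (hε₁1 : ε₁ < 1) (hε₂0 : 0 ≤ ε₂) (hε₂1 : ε₂ < 1)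
    (V : Submodule ℝ (EuclideanSpace ℝ (Fin d)))
    (S₁ : EuclideanSpace ℝ (Fin d) →ₗ[ℝ] EuclideanSpace ℝ (Fin k₁))
    (S₂ : EuclideanSpace ℝ (Fin k₁) →ₗ[ℝ] EuclideanSpace ℝ (Fin k₂))
    (hS₁ : ∀ x ∈ V, ∀ y ∈ V, |⟪x, y⟫ - ⟪S₁ x, S₁ y⟫| ≤ ε₁ * ‖x‖ * ‖y‖)
    (hS₂ : ∀ x ∈ V.map S₁, ∀ y ∈ V.map S₁, |⟪x, y⟫ - ⟪S₂ x, S₂ y⟫| ≤ ε₂ * ‖x‖ * ‖y‖) :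
    ∀ x ∈ V,
      (1 - ε₁) * (1 - ε₂) * ‖x‖ ^ 2 ≤ ‖S₂ (S₁ x)‖ ^ 2 ∧
      ‖S₂ (S₁ x)‖ ^ 2 ≤ (1 + ε₁) * (1 + ε₂) * ‖x‖ ^ 2 := by
  intro x hx
  have hxm : S₁ x ∈ V.map S₁ := Submodule.mem_map_of_mem hx
  have h1 := hS₁ x hx x hx
  have h2 := hS₂ (S₁ x) hxm (S₁ x) hxm
  rw [real_inner_self_eq_norm_sq, real_inner_self_eq_norm_sq] at h1 h2
  have h1' := abs_le.mp h1
  have h2' := abs_le.mp h2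
  have hx2 : (0:ℝ) ≤ ‖x‖ ^ 2 := sq_nonneg _
  have hS1l : (1 - ε₁) * ‖x‖ ^ 2 ≤ ‖S₁ x‖ ^ 2 := by nlinarith [h1'.1, h1'.2]
  have hS1u : ‖S₁ x‖ ^ 2 ≤ (1 + ε₁) * ‖x‖ ^ 2 := by nlinarith [h1'.1, h1'.2]
  have hS2l : (1 - ε₂) * ‖S₁ x‖ ^ 2 ≤ ‖S₂ (S₁ x)‖ ^ 2 := by nlinarith [h2'.1, h2'.2]
  have hS2u : ‖S₂ (S₁ x)‖ ^ 2 ≤ (1 + ε₂) * ‖S₁ x‖ ^ 2 := by nlinarith [h2'.1, h2'.2]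
  constructor <;> nlinarith [sq_nonneg ‖S₁ x‖]
end

section
/- Let ε₁, ε₂ ∈ [0,1), let V be a subspace of ℝ^d, let S₁ : ℝ^d → ℝ^{k₁} be a linear map that is an ε₁-subspace embedding for V, and let S₂ : ℝ^{k₁} → ℝ^{k₂} be a linear map that is an ε₂-subspace embedding for the image subspace S₁(V). Then the composition S₂ ∘ S₁ is an (ε₁ + ε₂ + ε₁ε₂)-subspace embedding for V; that is, for all x, y ∈ V, |⟨x,y⟩ − ⟨S₂S₁x, S₂S₁y⟩| ≤ ((1+ε₁)(1+ε₂) − 1)·‖x‖₂·‖y‖₂. -/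
open RealInnerProductSpace

/-- Multisketch composition: if `S₁` is an `ε₁`-subspace embedding for `V` and `S₂` is an
`ε₂`-subspace embedding for the image subspace `S₁(V)` (with `ε₁, ε₂ ∈ [0,1)`), then `S₂ ∘ S₁`
is an `(ε₁ + ε₂ + ε₁ε₂)`-subspace embedding for `V`: for all `x, y ∈ V`,
`|⟨x,y⟩ − ⟨S₂S₁x, S₂S₁y⟩| ≤ ((1+ε₁)(1+ε₂) − 1)·‖x‖₂·‖y‖₂`. -/
theorem countsketch_stmt4 {d k₁ k₂ : ℕ} (ε₁ ε₂ : ℝ)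
    (hε₁0 : 0 ≤ ε₁) (hε₁1 : ε₁ < 1) (hε₂0 : 0 ≤ ε₂) (hε₂1 : ε₂ < 1)
    (V : Submodule ℝ (EuclideanSpace ℝ (Fin d)))
    (S₁ : EuclideanSpace ℝ (Fin d) →ₗ[ℝ] EuclideanSpace ℝ (Fin k₁))
    (S₂ : EuclideanSpace ℝ (Fin k₁) →ₗ[ℝ] EuclideanSpace ℝ (Fin k₂))
    (hS₁ : ∀ x ∈ V, ∀ y ∈ V, |⟪x, y⟫ - ⟪S₁ x, S₁ y⟫| ≤ ε₁ * ‖x‖ * ‖y‖)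
    (hS₂ : ∀ x ∈ V.map S₁, ∀ y ∈ V.map S₁, |⟪x, y⟫ - ⟪S₂ x, S₂ y⟫| ≤ ε₂ * ‖x‖ * ‖y‖) :
    ∀ x ∈ V, ∀ y ∈ V,
      |⟪x, y⟫ - ⟪S₂ (S₁ x), S₂ (S₁ y)⟫| ≤ ((1 + ε₁) * (1 + ε₂) - 1) * ‖x‖ * ‖y‖ := by
  intro x hx y hy
  have hxm : S₁ x ∈ V.map S₁ := Submodule.mem_map_of_mem hx
  have hym : S₁ y ∈ V.map S₁ := Submodule.mem_map_of_mem hy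
  -- norm bounds
  have hnorm : ∀ z ∈ V, ‖S₁ z‖ ^ 2 ≤ (1 + ε₁) * ‖z‖ ^ 2 := by
    intro z hz
    have h := hS₁ z hz z hz
    rw [real_inner_self_eq_norm_sq, real_inner_self_eq_norm_sq] at h
    have := abs_le.mp h
    nlinarith [this.1, this.2]
  have hprod : ‖S₁ x‖ * ‖S₁ y‖ ≤ (1 + ε₁) * (‖x‖ * ‖y‖) := by
    have h1 := hnorm x hx
    have h2 := hnorm y hy
    have hprod2 : (‖S₁ x‖ * ‖S₁ y‖) ^ 2 ≤ ((1 + ε₁) * (‖x‖ * ‖y‖)) ^ 2 := by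
      have := mul_le_mul h1 h2 (sq_nonneg (‖S₁ y‖)) (by positivity)
      nlinarith
    nlinarith [mul_nonneg (norm_nonneg (S₁ x)) (norm_nonneg (S₁ y)),
      mul_nonneg (mul_nonneg (by linarith : (0:ℝ) ≤ 1 + ε₁) (norm_nonneg x)) (norm_nonneg y)]
  have h1 := hS₁ x hx y hy
  have h2 := hS₂ (S₁ x) hxm (S₁ y) hym
  have h3 : ε₂ * ‖S₁ x‖ * ‖S₁ y‖ ≤ ε₂ * ((1 + ε₁) * (‖x‖ * ‖y‖)) := by
    rw [mul_assoc]
    exact mul_le_mul_of_nonneg_left hprod hε₂0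
  calc |⟪x, y⟫ - ⟪S₂ (S₁ x), S₂ (S₁ y)⟫|
      ≤ |⟪x, y⟫ - ⟪S₁ x, S₁ y⟫| + |⟪S₁ x, S₁ y⟫ - ⟪S₂ (S₁ x), S₂ (S₁ y)⟫| := by
        exact abs_sub_le _ _ _
    _ ≤ ε₁ * ‖x‖ * ‖y‖ + ε₂ * ((1 + ε₁) * (‖x‖ * ‖y‖)) := by
        exact add_le_add h1 (le_trans h2 h3)
    _ = ((1 + ε₁) * (1 + ε₂) - 1) * ‖x‖ * ‖y‖ := by ring
end

section
/- Let A ∈ ℝ^{d×n} have full column rank, let b ∈ ℝ^d, let R₀ ∈ ℝ^{n×n} be an invertible upper triangular matrix, set Q₀ = A·R₀⁻¹, let R₁ ∈ ℝ^{n×n} be an invertible upper triangular matrix with R₁ᵀ·R₁ = Q₀ᵀ·Q₀, and set R = R₁·R₀. Then the vector x = R⁻¹·R₁⁻ᵀ·Q₀ᵀ·b satisfies the normal equations Aᵀ·A·x = Aᵀ·b, and consequently x minimizes ‖b − Aw‖₂ over all w ∈ ℝ^n. In exact arithmetic this establishes the correctness of the rand_cholQR least squares solver. -/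
open Matrix

/-!
Writing `A = Q₀R₀`, the Cholesky relation `R₁ᵀR₁ = Q₀ᵀQ₀` gives `AᵀA = RᵀR` with `R = R₁R₀`, so
`AᵀA·R⁻¹R₁⁻ᵀQ₀ᵀ = RᵀR₁⁻ᵀQ₀ᵀ = R₀ᵀQ₀ᵀ = Aᵀ` and `x` solves the normal equations. These say that
the residual `b - Ax` is orthogonal to the range of `A`, and Pythagoras then gives
`‖b - Aw‖² = ‖b - Ax‖² + ‖A(x - w)‖²`.
-/

open scoped RealInnerProductSpace

theorem norm_sub_le_norm_sub_of_inner_eq_zero {F : Type*} [NormedAddCommGroup F]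
    [InnerProductSpace ℝ F] {b p q : F} (h : ⟪b - p, p - q⟫ = 0) : ‖b - p‖ ≤ ‖b - q‖ := by
  have hpyth : ‖b - q‖ ^ 2 = ‖b - p‖ ^ 2 + ‖p - q‖ ^ 2 := by
    rw [← sub_add_sub_cancel b p q, norm_add_sq_real, h, mul_zero, add_zero]
  exact le_of_sq_le_sq (by nlinarith [sq_nonneg ‖p - q‖]) (norm_nonneg _)

namespace Matrix

section CholeskyQR

variable {m n α : Type*} [Fintype n] [CommRing α] {A Q₀ : Matrix m n α} {R₀ R₁ : Matrix n n α}

theorem transpose_mul_self_eq_of_cholesky [Fintype m] (hA : A = Q₀ * R₀)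
    (hChol : R₁ᵀ * R₁ = Q₀ᵀ * Q₀) : Aᵀ * A = (R₁ * R₀)ᵀ * (R₁ * R₀) := by
  rw [hA, transpose_mul, transpose_mul, Matrix.mul_assoc, ← Matrix.mul_assoc Q₀ᵀ, ← hChol,
    Matrix.mul_assoc, Matrix.mul_assoc]

variable [DecidableEq n]

theorem eq_mul_of_eq_mul_nonsing_inv (hR₀ : IsUnit R₀) (hQ₀ : Q₀ = A * R₀⁻¹) : A = Q₀ * R₀ := by
  rw [hQ₀, nonsing_inv_mul_cancel_right _ _ ((isUnit_iff_isUnit_det R₀).mp hR₀)]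

theorem transpose_mul_self_mul_cholQR_solve [Fintype m] (hR₀ : IsUnit R₀) (hR₁ : IsUnit R₁)
    (hQ₀ : Q₀ = A * R₀⁻¹) (hChol : R₁ᵀ * R₁ = Q₀ᵀ * Q₀) :
    Aᵀ * A * (R₁ * R₀)⁻¹ * (R₁ᵀ)⁻¹ * Q₀ᵀ = Aᵀ := by
  have hA := eq_mul_of_eq_mul_nonsing_inv hR₀ hQ₀
  have hR : IsUnit (R₁ * R₀).det := (isUnit_iff_isUnit_det _).mp (hR₁.mul hR₀)
  have hR₁t : IsUnit R₁ᵀ.det := by rwa [det_transpose, ← isUnit_iff_isUnit_det]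
  calc Aᵀ * A * (R₁ * R₀)⁻¹ * (R₁ᵀ)⁻¹ * Q₀ᵀ
      = (R₁ * R₀)ᵀ * ((R₁ * R₀) * (R₁ * R₀)⁻¹) * ((R₁ᵀ)⁻¹ * Q₀ᵀ) := by
        rw [transpose_mul_self_eq_of_cholesky hA hChol]; simp only [Matrix.mul_assoc]
    _ = R₀ᵀ * (R₁ᵀ * (R₁ᵀ)⁻¹) * Q₀ᵀ := by
        rw [mul_nonsing_inv _ hR, Matrix.mul_one, transpose_mul]; simp only [Matrix.mul_assoc]
    _ = Aᵀ := by rw [mul_nonsing_inv _ hR₁t, Matrix.mul_one, ← transpose_mul, hA]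

end CholeskyQR

end Matrix

theorem inner_sub_mulVecEuc_eq_zero_of_normal_eq {d n : ℕ} {A : Matrix (Fin d) (Fin n) ℝ}
    {b : EuclideanSpace ℝ (Fin d)} {x : Fin n → ℝ}
    (hx : (Aᵀ * A).mulVec x = Aᵀ.mulVec (WithLp.equiv 2 (Fin d → ℝ) b)) (v : Fin n → ℝ) :
    ⟪b - mulVecEuc A x, mulVecEuc A v⟫ = 0 := by
  have hres : Aᵀ.mulVec (WithLp.equiv 2 (Fin d → ℝ) b - A.mulVec x) = 0 := by
    rw [mulVec_sub, mulVec_mulVec, hx, sub_self]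
  calc ⟪b - mulVecEuc A x, mulVecEuc A v⟫
      = (WithLp.equiv 2 (Fin d → ℝ) b - A.mulVec x) ⬝ᵥ A.mulVec v := by
        simp [EuclideanSpace.inner_eq_star_dotProduct, mulVecEuc, dotProduct_comm]
    _ = 0 := by rw [dotProduct_mulVec, ← mulVec_transpose, hres, zero_dotProduct]

theorem norm_sub_mulVecEuc_le_of_normal_eq {d n : ℕ} {A : Matrix (Fin d) (Fin n) ℝ}
    {b : EuclideanSpace ℝ (Fin d)} {x : Fin n → ℝ}
    (hx : (Aᵀ * A).mulVec x = Aᵀ.mulVec (WithLp.equiv 2 (Fin d → ℝ) b)) (w : Fin n → ℝ) :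
    ‖b - mulVecEuc A x‖ ≤ ‖b - mulVecEuc A w‖ := by
  refine norm_sub_le_norm_sub_of_inner_eq_zero ?_
  have hlin : mulVecEuc A x - mulVecEuc A w = mulVecEuc A (x - w) := by
    simp [mulVecEuc, mulVec_sub]
  rw [hlin, inner_sub_mulVecEuc_eq_zero_of_normal_eq hx]

theorem countsketch_stmt13_general {d n : ℕ}
    (A : Matrix (Fin d) (Fin n) ℝ)
    (b : EuclideanSpace ℝ (Fin d))
    (R₀ : Matrix (Fin n) (Fin n) ℝ)
    (hR₀inv : IsUnit R₀)
    (Q₀ : Matrix (Fin d) (Fin n) ℝ) (hQ₀ : Q₀ = A * R₀⁻¹)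
    (R₁ : Matrix (Fin n) (Fin n) ℝ)
    (hR₁inv : IsUnit R₁)
    (hChol : R₁ᵀ * R₁ = Q₀ᵀ * Q₀)
    (R : Matrix (Fin n) (Fin n) ℝ) (hR : R = R₁ * R₀)
    (x : Fin n → ℝ)
    (hx : x = R⁻¹.mulVec ((R₁ᵀ)⁻¹.mulVec (Q₀ᵀ.mulVec (WithLp.equiv 2 (Fin d → ℝ) b)))) :
    (Aᵀ * A).mulVec x = Aᵀ.mulVec (WithLp.equiv 2 (Fin d → ℝ) b) ∧
    ∀ w : Fin n → ℝ, ‖b - mulVecEuc A x‖ ≤ ‖b - mulVecEuc A w‖ := by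
  have hnormal : (Aᵀ * A).mulVec x = Aᵀ.mulVec (WithLp.equiv 2 (Fin d → ℝ) b) := by
    rw [hx, hR, mulVec_mulVec, mulVec_mulVec, mulVec_mulVec,
      transpose_mul_self_mul_cholQR_solve hR₀inv hR₁inv hQ₀ hChol]
  exact ⟨hnormal, norm_sub_mulVecEuc_le_of_normal_eq hnormal⟩

/-- Correctness of the rand_cholQR least squares solver in exact arithmetic: with `A` of full
column rank, `R₀` invertible upper triangular, `Q₀ = A·R₀⁻¹`, `R₁` invertible upper triangular
with `R₁ᵀR₁ = Q₀ᵀQ₀`, and `R = R₁·R₀`, the vector `x = R⁻¹·R₁⁻ᵀ·Q₀ᵀ·b` satisfies the normal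
equations `AᵀA·x = Aᵀb`, hence minimizes `‖b − Aw‖₂` over `w ∈ ℝ^n`. -/
theorem countsketch_stmt13 {d n : ℕ}
    (A : Matrix (Fin d) (Fin n) ℝ) (hA : Function.Injective A.mulVec)
    (b : EuclideanSpace ℝ (Fin d))
    (R₀ : Matrix (Fin n) (Fin n) ℝ)
    (hR₀tri : R₀.BlockTriangular (id : Fin n → Fin n)) (hR₀inv : IsUnit R₀)
    (Q₀ : Matrix (Fin d) (Fin n) ℝ) (hQ₀ : Q₀ = A * R₀⁻¹)
    (R₁ : Matrix (Fin n) (Fin n) ℝ)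
    (hR₁tri : R₁.BlockTriangular (id : Fin n → Fin n)) (hR₁inv : IsUnit R₁)
    (hChol : R₁ᵀ * R₁ = Q₀ᵀ * Q₀)
    (R : Matrix (Fin n) (Fin n) ℝ) (hR : R = R₁ * R₀)
    (x : Fin n → ℝ)
    (hx : x = R⁻¹.mulVec ((R₁ᵀ)⁻¹.mulVec (Q₀ᵀ.mulVec (WithLp.equiv 2 (Fin d → ℝ) b)))) :
    (Aᵀ * A).mulVec x = Aᵀ.mulVec (WithLp.equiv 2 (Fin d → ℝ) b) ∧
    ∀ w : Fin n → ℝ, ‖b - mulVecEuc A x‖ ≤ ‖b - mulVecEuc A w‖ :=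
  countsketch_stmt13_general A b R₀ hR₀inv Q₀ hQ₀ R₁ hR₁inv hChol R hR x hx
end
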